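/- Let A be an n×n real matrix all of whose eigenvalues have negative real part (Hurwitz). Then there exists a symmetric positive definite matrix P such that P·A + Aᵀ·P = -I. -/

import Mathlib

/-!
The Cayley transform `B = (1 + A) (1 - A)⁻¹` carries each eigenvalue `λ` of `A` to
`(1 + λ) / (1 - λ)`, which lies in the open unit disc when `Re λ < 0`; by Gelfand's formula the
norms of the powers of `B` are then summable. For positive definite `C` the Stein series
`S = ∑ (Bᵏ)ᵀ C Bᵏ` is positive definite and solves `S - Bᵀ S B = C`, and conjugating this equation
by `1 - A` gives `(2 S) A + Aᵀ (2 S) = -(1 - A)ᵀ C (1 - A)`. The choice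
`C = ((1 - A)⁻¹)ᵀ (1 - A)⁻¹` makes the right-hand side `-1`.
-/

open Filter Matrix

section Cayley

variable {𝕜 R : Type*} [Field 𝕜] [NeZero (2 : 𝕜)] [Ring R] [Algebra 𝕜 R]

theorem spectrum.div_mem_of_mul_one_sub_eq {a b : R} (ha : IsUnit (1 - a))
    (hb : b * (1 - a) = 1 + a) {z : 𝕜} (hz : z ∈ spectrum 𝕜 b) :
    z + 1 ≠ 0 ∧ (z - 1) / (z + 1) ∈ spectrum 𝕜 a := by
  have hmul : (algebraMap 𝕜 R z - b) * (1 - a) = algebraMap 𝕜 R (z - 1) - (z + 1) • a := by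
    rw [sub_mul, hb, map_sub, map_one, add_smul, one_smul, Algebra.smul_def, mul_sub, mul_one]
    abel
  rw [spectrum.mem_iff, ← Units.isUnit_mul_units _ ha.unit, IsUnit.unit_spec, hmul] at hz
  have hz1 : z + 1 ≠ 0 := by
    intro h
    refine hz ?_
    rw [h, zero_smul, sub_zero, show z - 1 = -2 by linear_combination h]
    exact (isUnit_iff_ne_zero.mpr (neg_ne_zero.mpr two_ne_zero)).map _
  refine ⟨hz1, spectrum.mem_iff.mpr fun hu => hz ?_⟩
  have : algebraMap 𝕜 R (z - 1) - (z + 1) • a =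
      algebraMap 𝕜 R (z + 1) * (algebraMap 𝕜 R ((z - 1) / (z + 1)) - a) := by
    rw [mul_sub, ← map_mul, mul_div_cancel₀ _ hz1, Algebra.smul_def]
  rw [this]
  exact ((isUnit_iff_ne_zero.mpr hz1).map _).mul hu

end Cayley

theorem Complex.norm_lt_one_of_re_div_neg {z : ℂ} (h : ((z - 1) / (z + 1)).re < 0) :
    ‖z‖ < 1 := by
  rw [Complex.div_re, ← add_div] at h
  have hnum := neg_of_div_neg_left h (Complex.normSq_nonneg _)
  simp only [Complex.sub_re, Complex.add_re, Complex.one_re, Complex.sub_im, Complex.add_im,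
    Complex.one_im, sub_zero, add_zero] at hnum
  rw [← sq_lt_one_iff₀ (norm_nonneg z), Complex.sq_norm, Complex.normSq_apply]
  nlinarith

section HalfPlane

variable {A : Type*} [Ring A] [Algebra ℂ A] {a : A}

theorem isUnit_one_sub_of_forall_re_neg (ha : ∀ μ ∈ spectrum ℂ a, μ.re < 0) :
    IsUnit (1 - a) := by
  simpa using spectrum.notMem_iff.mp fun h1 => (ha 1 h1).not_ge zero_le_one

theorem norm_lt_one_of_mem_spectrum_of_mul_one_sub_eq {b : A}
    (ha : ∀ μ ∈ spectrum ℂ a, μ.re < 0) (hb : b * (1 - a) = 1 + a) :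
    ∀ z ∈ spectrum ℂ b, ‖z‖ < 1 := fun _ hz =>
  Complex.norm_lt_one_of_re_div_neg
    (ha _ (spectrum.div_mem_of_mul_one_sub_eq (isUnit_one_sub_of_forall_re_neg ha) hb hz).2)

end HalfPlane

theorem summable_norm_pow_of_forall_norm_lt_one {A : Type*} [NormedRing A] [NormedAlgebra ℂ A]
    [CompleteSpace A] {a : A} (h : ∀ z ∈ spectrum ℂ a, ‖z‖ < 1) :
    Summable fun k : ℕ => ‖a ^ k‖ := by
  rcases subsingleton_or_nontrivial A with _ | _
  · simpa only [Subsingleton.elim _ (0 : A), norm_zero] using summable_zero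
  obtain ⟨r, hρr, hr1⟩ := ENNReal.lt_iff_exists_nnreal_btwn.mp
    (spectrum.spectralRadius_lt_of_forall_lt a (r := 1) fun z hz => by exact_mod_cast h z hz)
  have hr1' : (r : ℝ) < 1 := by exact_mod_cast hr1
  refine .of_norm_bounded_eventually_nat (summable_geometric_of_lt_one r.2 hr1') ?_
  filter_upwards [(spectrum.pow_norm_pow_one_div_tendsto_nhds_spectralRadius a).eventually
    (gt_mem_nhds hρr), eventually_ge_atTop 1] with k hk hk1
  have hroot : ‖a ^ k‖ ^ (1 / k : ℝ) < r := by
    rwa [ENNReal.ofReal_lt_iff_lt_toReal (by positivity) ENNReal.coe_ne_top] at hk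
  calc ‖‖a ^ k‖‖ = (‖a ^ k‖ ^ (1 / k : ℝ)) ^ k := by
        rw [norm_norm, one_div, Real.rpow_inv_natCast_pow (norm_nonneg _) (by omega)]
    _ ≤ r ^ k := pow_le_pow_left₀ (by positivity) hroot.le k

namespace Matrix

-- The Frobenius norm is submultiplicative and invariant under transposition and complexification.
open scoped Matrix.Norms.Frobenius

variable {ι : Type*} [Fintype ι] [DecidableEq ι]

theorem summable_norm_pow_of_forall_norm_lt_one {B : Matrix ι ι ℝ}
    (h : ∀ z ∈ spectrum ℂ (B.map (algebraMap ℝ ℂ)), ‖z‖ < 1) :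
    Summable fun k : ℕ => ‖B ^ k‖ := by
  refine (_root_.summable_norm_pow_of_forall_norm_lt_one h).congr fun k => ?_
  rw [← RingHom.mapMatrix_apply, ← map_pow, RingHom.mapMatrix_apply,
    frobenius_norm_map_eq _ _ fun x => by simp]

theorem summable_transpose_pow_mul_mul_pow {B : Matrix ι ι ℝ}
    (hB : Summable fun k : ℕ => ‖B ^ k‖) (C : Matrix ι ι ℝ) :
    Summable fun k : ℕ => (B ^ k)ᵀ * C * B ^ k := by
  refine .of_norm_bounded (hB.mul_left ((∑' j, ‖B ^ j‖) * ‖C‖)) fun k => ?_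
  calc ‖(B ^ k)ᵀ * C * B ^ k‖ ≤ ‖(B ^ k)ᵀ‖ * ‖C‖ * ‖B ^ k‖ := norm_mul₃_le
    _ = ‖B ^ k‖ * ‖C‖ * ‖B ^ k‖ := by rw [frobenius_norm_transpose]
    _ ≤ (∑' j, ‖B ^ j‖) * ‖C‖ * ‖B ^ k‖ := by
      gcongr
      exact hB.le_tsum k fun j _ => norm_nonneg _

theorem exists_posDef_sub_transpose_mul_mul_eq {B C : Matrix ι ι ℝ}
    (hB : Summable fun k : ℕ => ‖B ^ k‖) (hC : C.PosDef) :
    ∃ S : Matrix ι ι ℝ, S.PosDef ∧ S - Bᵀ * S * B = C := by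
  have hsum := summable_transpose_pow_mul_mul_pow hB C
  set S := ∑' k, (B ^ k)ᵀ * C * B ^ k with hS
  have hshift : ∑' k, (B ^ (k + 1))ᵀ * C * B ^ (k + 1) = Bᵀ * S * B := by
    rw [← hsum.tsum_mul_left, ← (hsum.mul_left _).tsum_mul_right]
    congr 1 with k : 1
    simp only [pow_succ, transpose_mul, Matrix.mul_assoc]
  refine ⟨S, PosDef.of_dotProduct_mulVec_pos ?_ fun x hx => ?_, ?_⟩
  · have hCT : Cᵀ = C := isHermitian_iff_isSymm.mp hC.isHermitian
    rw [isHermitian_iff_isSymm, IsSymm, hS, transpose_tsum]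
    congr 1 with k : 1
    rw [transpose_mul, transpose_mul, transpose_transpose, hCT, Matrix.mul_assoc]
  · have hq : HasSum (fun k => star x ⬝ᵥ ((B ^ k)ᵀ * C * B ^ k) *ᵥ x) (star x ⬝ᵥ S *ᵥ x) :=
      hsum.hasSum.map (AddMonoidHom.mk' (fun M : Matrix ι ι ℝ => star x ⬝ᵥ M *ᵥ x)
        fun M N => by simp [add_mulVec, dotProduct_add])
        (continuous_const.dotProduct (continuous_id.matrix_mulVec continuous_const))
    rw [← hq.tsum_eq]
    refine hq.summable.tsum_pos (fun k => ?_) 0 ?_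
    · simpa using (hC.posSemidef.conjTranspose_mul_mul_same (B ^ k)).dotProduct_mulVec_nonneg x
    · simpa using hC.dotProduct_mulVec_pos hx
  · have h0 := hsum.tsum_eq_zero_add
    rw [hshift, pow_zero, transpose_one, Matrix.one_mul, Matrix.mul_one] at h0
    exact sub_eq_of_eq_add h0

theorem transpose_mul_sub_mul_eq_of_mul_one_sub_eq {R : Type*} [CommRing R]
    {A B S : Matrix ι ι R} (hB : B * (1 - A) = 1 + A) :
    (1 - A)ᵀ * (S - Bᵀ * S * B) * (1 - A) = -((2 : R) • (S * A + Aᵀ * S)) := by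
  have h : (1 - A)ᵀ * (Bᵀ * S * B) * (1 - A) = (1 + A)ᵀ * S * (1 + A) := by
    rw [← hB, transpose_mul]
    simp only [Matrix.mul_assoc]
  rw [Matrix.mul_sub (1 - A)ᵀ S, Matrix.sub_mul _ _ (1 - A), h, transpose_sub, transpose_add,
    transpose_one, two_smul]
  noncomm_ring

theorem isUnit_of_isUnit_mapMatrix {K L : Type*} [Field K] [CommRing L] [Nontrivial L]
    (f : K →+* L) {M : Matrix ι ι K} (h : IsUnit (f.mapMatrix M)) : IsUnit M := by
  rw [isUnit_iff_isUnit_det, ← RingHom.map_det] at h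
  rw [isUnit_iff_isUnit_det, isUnit_iff_ne_zero]
  rintro h0
  rw [h0, map_zero] at h
  exact not_isUnit_zero h

end Matrix

/-- Lyapunov's theorem: for any Hurwitz matrix `A` (all complex eigenvalues have
negative real part) there exists a symmetric positive definite `P` with
`P*A + Aᵀ*P = -I`. -/
theorem hurwitz_exists_lyapunov_solution {n : ℕ} (A : Matrix (Fin n) (Fin n) ℝ)
    (hA : ∀ μ ∈ spectrum ℂ (A.map (algebraMap ℝ ℂ)), μ.re < 0) :
    ∃ P : Matrix (Fin n) (Fin n) ℝ,
      P.IsSymm ∧ P.PosDef ∧ P * A + A.transpose * P = -1 := by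
  have hunit : IsUnit (1 - A) := isUnit_of_isUnit_mapMatrix (algebraMap ℝ ℂ) <| by
    rw [map_sub, map_one]
    exact isUnit_one_sub_of_forall_re_neg hA
  have hdet := (isUnit_iff_isUnit_det _).mp hunit
  set M := (1 - A)⁻¹
  set B := (1 + A) * M
  have hB : B * (1 - A) = 1 + A := nonsing_inv_mul_cancel_right _ _ hdet
  have hBℂ := congrArg (algebraMap ℝ ℂ).mapMatrix hB
  rw [map_mul, map_sub, map_add, map_one] at hBℂ
  have hC : (Mᵀ * M).PosDef := by
    simpa using PosDef.conjTranspose_mul_self M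
      (mulVec_injective_iff_isUnit.mpr (isUnit_nonsing_inv_iff.mpr hunit))
  obtain ⟨S, hS, hSB⟩ := exists_posDef_sub_transpose_mul_mul_eq
    (Matrix.summable_norm_pow_of_forall_norm_lt_one
      (norm_lt_one_of_mem_spectrum_of_mul_one_sub_eq hA hBℂ)) hC
  have hS2 := hS.smul (two_pos (α := ℝ))
  refine ⟨(2 : ℝ) • S, isHermitian_iff_isSymm.mp hS2.isHermitian, hS2, ?_⟩
  have key := transpose_mul_sub_mul_eq_of_mul_one_sub_eq (S := S) hB
  rw [hSB, ← Matrix.mul_assoc, ← transpose_mul, Matrix.mul_assoc, nonsing_inv_mul _ hdet,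
    transpose_one, Matrix.one_mul] at key
  rw [smul_mul_assoc, mul_smul_comm, ← smul_add, ← neg_eq_iff_eq_neg.mpr key]
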